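/- arXiv:math/9905093 — 2 statements merged into one kernel-verified Lean document; each statement's English description precedes it below -/
import Mathlib

section
/- Let n ≥ 1 and q ∈ ℂ with 0 < |q| < 1. Let Δ be a linear operator on ℂ((z⁻¹)) that commutes with the dilation ĥ, is skew-symmetric with respect to the residue pairing (Res((Δf)·g) = −Res(f·(Δg)) for all f, g), and satisfies Δ((2 − ĥⁿ − ĥ⁻ⁿ)f) = 0 for every f ∈ ℂ((z⁻¹)). Then Δ = 0. (Key step of Theorem 2.8 and Theorem 6.2: uniqueness of the Poisson bracket satisfying the involutivity condition.) -/
/-!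
The operator `2 − ĥⁿ − ĥ⁻ⁿ` acts on the coefficient of `z^m` as multiplication by
`2 − t − t⁻¹ = −(t − 1)² / t` with `t = q^{nm}`, which vanishes only for `m = 0` since `|q| < 1`.
Hence its image is every series without constant term, and `Δ` kills all of them.
What remains is `Δ 1`: it is fixed by `ĥ` (because `ĥ 1 = 1`), so it is a constant, and
skew-symmetry gives `Res (Δ 1) = −Res (Δ 1)`.
-/

noncomputable section

/-- Dilation operator: `(dil q k a)(z) = a(q^k z)`.
A formal Laurent series `a(z) = ∑_{m ≤ N} a_m z^m ∈ ℂ((z⁻¹))` is encoded as the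
Hahn series `F : LaurentSeries ℂ` with `F.coeff j = a_{-j}` (support bounded below,
i.e. finitely many positive powers of `z`); dilation sends `a_m ↦ q^{k m} a_m`,
i.e. `coeff j ↦ q^{-(k j)} * coeff j`. -/
def dil (q : ℂ) (k : ℤ) (F : LaurentSeries ℂ) : LaurentSeries ℂ where
  coeff := fun j => q ^ (-(k * j)) * F.coeff j
  isPWO_support' := by
    apply F.isPWO_support'.mono
    intro j hj
    simp only [Function.mem_support] at hj ⊢
    intro h
    exact hj (by rw [h, mul_zero])

/-- `Res a = a₀`, the coefficient of `z⁰`. -/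
def Res (F : LaurentSeries ℂ) : ℂ := F.coeff 0

/-- The bilinear pairing `⟨F, G⟩ = ∑_j Res (F_j G_j)` on `H_n = (ℂ((z⁻¹)))^n`. -/
def pair {n : ℕ} (F G : Fin n → LaurentSeries ℂ) : ℂ := ∑ j, Res (F j * G j)

/-- The operator `ĥτ̂_n` on `H_n`: `(ĥτ̂_n F)_j (z) = F_{j+1 mod n} (q z)`. -/
def htau (q : ℂ) {n : ℕ} [NeZero n] (F : Fin n → LaurentSeries ℂ) :
    Fin n → LaurentSeries ℂ := fun j => dil q 1 (F (j + 1))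

/-- `F ∈ U_n`, i.e. `F = (u(z), u(q⁻¹ z), …, u(q^{-(n-1)} z))` for some `u ∈ ℂ((z⁻¹))`. -/
def InU (q : ℂ) {n : ℕ} (F : Fin n → LaurentSeries ℂ) : Prop :=
  ∃ u : LaurentSeries ℂ, ∀ j : Fin n, F j = dil q (-((j : ℕ) : ℤ)) u

end

noncomputable section

def scaleCoeffs (c : ℤ → ℂ) (F : LaurentSeries ℂ) : LaurentSeries ℂ where
  coeff j := c j * F.coeff j
  isPWO_support' := F.isPWO_support.mono fun _ hj => right_ne_zero_of_mul hj

@[simp]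
lemma scaleCoeffs_coeff (c : ℤ → ℂ) (F : LaurentSeries ℂ) (j : ℤ) :
    (scaleCoeffs c F).coeff j = c j * F.coeff j := rfl

@[simp]
lemma dil_coeff (q : ℂ) (k : ℤ) (F : LaurentSeries ℂ) (j : ℤ) :
    (dil q k F).coeff j = q ^ (-(k * j)) * F.coeff j := rfl

lemma scaleCoeffs_scaleCoeffs_inv {c : ℤ → ℂ} (hc : ∀ j ≠ 0, c j ≠ 0)
    {G : LaurentSeries ℂ} (hG : G.coeff 0 = 0) :
    scaleCoeffs c (scaleCoeffs (fun j => (c j)⁻¹) G) = G := by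
  ext j
  rcases eq_or_ne j 0 with rfl | hj
  · simp [hG]
  · simp [← mul_assoc, mul_inv_cancel₀ (hc j hj)]

lemma two_smul_sub_dil_sub_dil (q : ℂ) (n : ℤ) (F : LaurentSeries ℂ) :
    (2 : ℂ) • F - dil q n F - dil q (-n) F
      = scaleCoeffs (fun j => 2 - (q ^ (n * j))⁻¹ - q ^ (n * j)) F := by
  ext j
  simp only [HahnSeries.coeff_sub, HahnSeries.coeff_smul, dil_coeff, scaleCoeffs_coeff,
    smul_eq_mul, neg_mul, neg_neg, zpow_neg]
  ring

lemma zpow_ne_one_of_norm_lt_one {𝕜 : Type*} [NormedDivisionRing 𝕜] {q : 𝕜} (hq : ‖q‖ < 1)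
    {m : ℤ} (hm : m ≠ 0) : q ^ m ≠ 1 := by
  rcases eq_or_ne q 0 with rfl | hq0
  · simp [zero_zpow m hm]
  · intro h
    have hnorm : ‖q‖ ^ m = ‖q‖ ^ (0 : ℤ) := by rw [← norm_zpow, h, norm_one, zpow_zero]
    exact hm (zpow_right_injective₀ (norm_pos_iff.mpr hq0) hq.ne hnorm)

lemma two_sub_inv_sub_ne_zero {K : Type*} [Field K] [CharZero K] {t : K} (ht : t ≠ 1) :
    2 - t⁻¹ - t ≠ 0 := by
  rcases eq_or_ne t 0 with rfl | ht0
  · norm_num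
  · have hsq : (t - 1) ^ 2 ≠ 0 := pow_ne_zero 2 (sub_ne_zero.mpr ht)
    intro h
    apply hsq
    field_simp at h
    linear_combination -h

lemma exists_two_smul_sub_dil_sub_dil_eq {q : ℂ} (hq : ‖q‖ < 1) {n : ℤ} (hn : n ≠ 0)
    {G : LaurentSeries ℂ} (hG : G.coeff 0 = 0) :
    ∃ F, (2 : ℂ) • F - dil q n F - dil q (-n) F = G := by
  refine ⟨scaleCoeffs (fun j => (2 - (q ^ (n * j))⁻¹ - q ^ (n * j))⁻¹) G, ?_⟩
  rw [two_smul_sub_dil_sub_dil]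
  refine scaleCoeffs_scaleCoeffs_inv (fun j hj => ?_) hG
  exact two_sub_inv_sub_ne_zero (zpow_ne_one_of_norm_lt_one hq (mul_ne_zero hn hj))

lemma dil_one (q : ℂ) (k : ℤ) : dil q k 1 = 1 := by
  ext j
  rcases eq_or_ne j 0 with rfl | hj
  · simp
  · simp [HahnSeries.coeff_one, hj]

lemma coeff_eq_zero_of_dil_eq_self {q : ℂ} (hq : ‖q‖ < 1) {F : LaurentSeries ℂ}
    (hF : dil q 1 F = F) {j : ℤ} (hj : j ≠ 0) : F.coeff j = 0 := by
  have hcoeff : q ^ (-(1 * j)) * F.coeff j = F.coeff j := by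
    rw [← dil_coeff, hF]
  have hne : q ^ (-(1 * j)) ≠ 1 := zpow_ne_one_of_norm_lt_one hq (by omega)
  by_contra h
  exact hne (mul_eq_right₀ h |>.mp hcoeff)

lemma LaurentSeries.linearMap_eq_zero {Δ : LaurentSeries ℂ →ₗ[ℂ] LaurentSeries ℂ}
    (h1 : Δ 1 = 0) (h : ∀ G : LaurentSeries ℂ, G.coeff 0 = 0 → Δ G = 0) : Δ = 0 := by
  refine LinearMap.ext fun F => ?_
  have hdecomp : F = F.coeff 0 • (1 : LaurentSeries ℂ) + (F - F.coeff 0 • 1) := by abel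
  rw [LinearMap.zero_apply, hdecomp, map_add, map_smul, h1, smul_zero, zero_add]
  exact h _ (by simp [HahnSeries.coeff_one])

end

theorem uniqueness_Delta_general (n : ℕ) (hn : 1 ≤ n) (q : ℂ)
    (hq1 : ‖q‖ < 1)
    (Δ : LaurentSeries ℂ →ₗ[ℂ] LaurentSeries ℂ)
    (hcomm : ∀ f, Δ (dil q 1 f) = dil q 1 (Δ f))
    (hskew : ∀ f g, Res (Δ f * g) = - Res (f * Δ g))
    (hker : ∀ f, Δ ((2 : ℂ) • f - dil q (n : ℤ) f - dil q (-(n : ℤ)) f) = 0) :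
    Δ = 0 := by
  refine LaurentSeries.linearMap_eq_zero ?_ fun G hG => ?_
  · have hfix : dil q 1 (Δ 1) = Δ 1 := by rw [← hcomm, dil_one]
    have hres : Res (Δ 1) = 0 := by
      have h := hskew 1 1
      rw [mul_one, one_mul] at h
      linear_combination h / 2
    ext j
    rcases eq_or_ne j 0 with rfl | hj
    · exact hres
    · exact coeff_eq_zero_of_dil_eq_self hq1 hfix hj
  · obtain ⟨F, rfl⟩ := exists_two_smul_sub_dil_sub_dil_eq hq1 (by omega : (n : ℤ) ≠ 0) hG
    exact hker F

/-- Key step of Theorems 2.8 and 6.2 (uniqueness of the involutive bracket):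
a linear operator `Δ` on `ℂ((z⁻¹))` commuting with the dilation `ĥ`,
skew-symmetric with respect to the residue pairing, and annihilating
`(2 − ĥⁿ − ĥ⁻ⁿ) f` for every `f`, is zero. -/
theorem uniqueness_Delta (n : ℕ) (hn : 1 ≤ n) (q : ℂ)
    (hq0 : 0 < ‖q‖) (hq1 : ‖q‖ < 1)
    (Δ : LaurentSeries ℂ →ₗ[ℂ] LaurentSeries ℂ)
    (hcomm : ∀ f, Δ (dil q 1 f) = dil q 1 (Δ f))
    (hskew : ∀ f g, Res (Δ f * g) = - Res (f * Δ g))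
    (hker : ∀ f, Δ ((2 : ℂ) • f - dil q (n : ℤ) f - dil q (-(n : ℤ)) f) = 0) :
    Δ = 0 :=
  uniqueness_Delta_general n hn q hq1 Δ hcomm hskew hker
end

section
/- Let q ∈ ℂ with 0 < |q| < 1. Let A, B : ℤ → ℂ((z⁻¹)) be families of Laurent series such that A_i = 0 for all i greater than some N_A, and B_i = 0 for all i greater than some N_B. Then Σ_{i ∈ ℤ} Res( A_i(z) · B_{−i}(q^i z) ) = Σ_{i ∈ ℤ} Res( B_i(z) · A_{−i}(q^i z) ), both sums having only finitely many nonzero terms. (Trace property Tr AB = Tr BA for the algebra ΨD_q of q-pseudodifference symbols A = Σ_{i ≤ N} a_i(z)D^i with relation D·a = a(qz)·D and Tr A = Res a₀.) -/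
/- Only the coefficients of `z^m` and `z^{-m}` meet in `Res (F(z) G(q^i z))`, carrying the factor
`q^{-i m}`; the same pairs with the same factor make up `Res (G(z) F(q^{-i} z))`. So the `i`-th
term of `Tr AB` equals the `(-i)`-th term of `Tr BA`, and the two traces are the same finite sum
reindexed by `i ↦ -i`. -/

lemma dil_zero (q : ℂ) (k : ℤ) : dil q k 0 = 0 := by
  ext j
  simp [dil]

lemma dil_support_subset (q : ℂ) (k : ℤ) (F : LaurentSeries ℂ) :
    (dil q k F).support ⊆ F.support := by
  intro j hj
  simp only [HahnSeries.mem_support, dil] at hj ⊢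
  intro h
  exact hj (by rw [h, mul_zero])

lemma res_mul_dil (q : ℂ) (i : ℤ) (F G : LaurentSeries ℂ) :
    Res (F * dil q i G) = Res (G * dil q (-i) F) := by
  unfold Res
  rw [HahnSeries.coeff_mul_right' G.isPWO_support' (dil_support_subset q i G),
    HahnSeries.coeff_mul_right' F.isPWO_support' (dil_support_subset q (-i) F)]
  refine Finset.sum_nbij' Prod.swap Prod.swap (fun _ hx => Finset.swap_mem_antidiagonal.mpr hx)
    (fun _ hx => Finset.swap_mem_antidiagonal.mpr hx) (fun _ _ => rfl) (fun _ _ => rfl) ?_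
  rintro ⟨j, k⟩ hjk
  obtain rfl : k = -j := by
    rw [Finset.mem_antidiagonal] at hjk
    linarith [hjk.2.2]
  simp only [dil, Prod.swap, show -(i * -j) = -(-i * j) by ring]
  ring

lemma finite_res_mul_dil_ne_zero (q : ℂ) (X Y : ℤ → LaurentSeries ℂ) (NX NY : ℤ)
    (hX : ∀ i : ℤ, NX < i → X i = 0) (hY : ∀ i : ℤ, NY < i → Y i = 0) :
    {i : ℤ | Res (X i * dil q i (Y (-i))) ≠ 0}.Finite := by
  refine (Set.finite_Icc (-NY) NX).subset fun i hi => ?_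
  by_contra hout
  rcases not_and_or.mp hout with hlow | hhigh
  · rw [Set.mem_ofPred_eq, hY (-i) (by linarith [not_le.mp hlow]), dil_zero, mul_zero] at hi
    exact hi rfl
  · rw [Set.mem_ofPred_eq, hX i (not_le.mp hhigh), zero_mul] at hi
    exact hi rfl

theorem trace_commutes_general (q : ℂ)
    (A B : ℤ → LaurentSeries ℂ) (NA NB : ℤ)
    (hA : ∀ i : ℤ, NA < i → A i = 0) (hB : ∀ i : ℤ, NB < i → B i = 0) :
    {i : ℤ | Res (A i * dil q i (B (-i))) ≠ 0}.Finite ∧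
    {i : ℤ | Res (B i * dil q i (A (-i))) ≠ 0}.Finite ∧
    ∑ᶠ i : ℤ, Res (A i * dil q i (B (-i)))
      = ∑ᶠ i : ℤ, Res (B i * dil q i (A (-i))) := by
  refine ⟨finite_res_mul_dil_ne_zero q A B NA NB hA hB,
    finite_res_mul_dil_ne_zero q B A NB NA hB hA, ?_⟩
  calc ∑ᶠ i : ℤ, Res (A i * dil q i (B (-i)))
      = ∑ᶠ i : ℤ, Res (B (-i) * dil q (-i) (A (- -i))) :=
        finsum_congr fun i => by rw [neg_neg]; exact res_mul_dil q i (A i) (B (-i))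
    _ = ∑ᶠ i : ℤ, Res (B i * dil q i (A (-i))) :=
        finsum_comp_equiv (Equiv.neg ℤ) (f := fun i => Res (B i * dil q i (A (-i))))

/-- Trace property `Tr AB = Tr BA` for q-pseudodifference symbols (section 2.2):
for families `A, B : ℤ → ℂ((z⁻¹))` vanishing above some index,
`∑_i Res (A_i(z) · B_{-i}(q^i z)) = ∑_i Res (B_i(z) · A_{-i}(q^i z))`,
both sums having only finitely many nonzero terms. -/
theorem trace_commutes (q : ℂ) (hq0 : 0 < ‖q‖) (hq1 : ‖q‖ < 1)
    (A B : ℤ → LaurentSeries ℂ) (NA NB : ℤ)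
    (hA : ∀ i : ℤ, NA < i → A i = 0) (hB : ∀ i : ℤ, NB < i → B i = 0) :
    {i : ℤ | Res (A i * dil q i (B (-i))) ≠ 0}.Finite ∧
    {i : ℤ | Res (B i * dil q i (A (-i))) ≠ 0}.Finite ∧
    ∑ᶠ i : ℤ, Res (A i * dil q i (B (-i)))
      = ∑ᶠ i : ℤ, Res (B i * dil q i (A (-i))) :=
  trace_commutes_general q A B NA NB hA hB
end
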